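/- Let f : (Fin 30 → ℝ) → ℝ be the third modified Griewank function f(x) = (1/4000)·∑_{n=1}^{30} ∑_{m=1}^{30} x_n·a_{n,m}·x_m - ∏_{n=1}^{30} ln(2 + cos(x_n)) + (ln 3)³⁰, where a_{n,m} = 1 for m ≠ n and a_{n,n} = n. Then f(x) ≥ 0 for all x ∈ ℝ³⁰, and f(0) = 0, so the origin is a global minimum point of f with minimum value 0. -/
import Mathlib


open Real Finset

/-- The third modified Griewank function on ℝ³⁰:
`f(x) = (1/4000) ∑_n ∑_m x_n a_{n,m} x_m - ∏_n ln(2 + cos(x_n)) + (ln 3)^30`,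
where `a_{n,m} = 1` for `m ≠ n` and `a_{n,n} = n` (indices 1 to 30; the `Fin 30`
index `n` corresponds to the index `n+1`). -/
noncomputable def griewankMod3 (x : Fin 30 → ℝ) : ℝ :=
  (1 / 4000) *
      ∑ n : Fin 30, ∑ m : Fin 30,
        x n * (if n = m then (n : ℝ) + 1 else 1) * x m -
    ∏ n : Fin 30, Real.log (2 + Real.cos (x n)) + (Real.log 3) ^ 30

theorem griewankMod3_global_min :
    (∀ x : Fin 30 → ℝ, 0 ≤ griewankMod3 x) ∧ griewankMod3 0 = 0 := by
  constructor
  · intro x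
    have hQ : 0 ≤ ∑ n : Fin 30, ∑ m : Fin 30,
        x n * (if n = m then (n : ℝ) + 1 else 1) * x m := by
      have key : ∑ n : Fin 30, ∑ m : Fin 30,
          x n * (if n = m then (n : ℝ) + 1 else 1) * x m
          = (∑ n : Fin 30, x n) ^ 2 + ∑ n : Fin 30, (n : ℝ) * (x n) ^ 2 := by
        have h : ∀ n m : Fin 30, x n * (if n = m then (n : ℝ) + 1 else 1) * x m
            = x n * x m + (if n = m then (n : ℝ) * (x n) ^ 2 else 0) := by
          intro n m
          by_cases h : n = m
          · subst h; simp; ring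
          · simp [h]
        simp only [h, Finset.sum_add_distrib, Finset.sum_ite_eq, Finset.mem_univ,
          if_true]
        rw [sq, Finset.sum_mul_sum]
      rw [key]
      have h1 : 0 ≤ (∑ n : Fin 30, x n) ^ 2 := sq_nonneg _
      have h2 : 0 ≤ ∑ n : Fin 30, (n : ℝ) * (x n) ^ 2 :=
        Finset.sum_nonneg fun n _ => mul_nonneg (by positivity) (sq_nonneg _)
      linarith
    have hP : ∏ n : Fin 30, Real.log (2 + Real.cos (x n)) ≤ (Real.log 3) ^ 30 := by
      calc ∏ n : Fin 30, Real.log (2 + Real.cos (x n))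
          ≤ ∏ _n : Fin 30, Real.log 3 := by
            apply Finset.prod_le_prod
            · intro i _
              apply Real.log_nonneg
              have := Real.neg_one_le_cos (x i)
              linarith
            · intro i _
              have h1 : (0:ℝ) < 2 + Real.cos (x i) := by
                have := Real.neg_one_le_cos (x i); linarith
              have h2 : 2 + Real.cos (x i) ≤ 3 := by
                have := Real.cos_le_one (x i); linarith
              exact Real.log_le_log h1 h2
        _ = (Real.log 3) ^ 30 := by simp [Finset.prod_const]
    unfold griewankMod3
    linarith
  · unfold griewankMod3
    norm_num [Real.cos_zero, Finset.prod_const]
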